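/- The only parts of 0 are 0 and *: if X + Y is misère-equal to 0, then X is misère-equal to 0 or to *, and likewise Y is misère-equal to 0 or to *. -/

import Mathlib

inductive IGame : Type where
  | mk : List IGame → IGame

namespace IGame

/-- The options of a game. -/
def opts : IGame → List IGame
  | mk l => l

theorem sizeOf_lt_of_mem {x : IGame} {l : List IGame} (h : x ∈ l) :
    sizeOf x < sizeOf (mk l) := by
  have := List.sizeOf_lt_of_mem h
  simp only [mk.sizeOf_spec]
  omega

/-- `x` is an option of `G`. -/
def IsOption (x G : IGame) : Prop := x ∈ G.opts

/-- The empty game `0`. -/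
def zero : IGame := mk []

/-- The game `* = {0}`. -/
def star : IGame := mk [zero]

/-- The game `*2 = {0, *}`. -/
def star2 : IGame := mk [zero, star]

/-- The game `*3 = {0, *, *2}`. -/
def star3 : IGame := mk [zero, star, star2]

/-- Disjunctive sum of games. -/
def add : IGame → IGame → IGame
  | mk l, mk r =>
    mk ((l.attach.map fun x => add x.1 (mk r)) ++
        (r.attach.map fun y => add (mk l) y.1))
termination_by G H => (sizeOf G, sizeOf H)
decreasing_by
  · exact Prod.Lex.left _ _ (sizeOf_lt_of_mem x.2)
  · exact Prod.Lex.right _ (sizeOf_lt_of_mem y.2)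

/-- `MisereP G` holds iff the misère outcome of `G` is `P`
(i.e. `G` has at least one option and no option is a `P`-position). -/
def MisereP : IGame → Prop
  | mk l => l ≠ [] ∧ ∀ x ∈ l, ¬ MisereP x
termination_by G => sizeOf G
decreasing_by exact sizeOf_lt_of_mem (by assumption)

/-- Misère equality of games. -/
def MEquiv (G H : IGame) : Prop :=
  ∀ X : IGame, MisereP (add G X) ↔ MisereP (add H X)

theorem mequiv_refl (G : IGame) : MEquiv G G := fun _ => Iff.rfl
theorem mequiv_symm {G H : IGame} (h : MEquiv G H) : MEquiv H G := fun X => (h X).symm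
theorem mequiv_trans {G H K : IGame} (h₁ : MEquiv G H) (h₂ : MEquiv H K) :
    MEquiv G K := fun X => (h₁ X).trans (h₂ X)

/-- `G` is linked to `H` if `G + T` and `H + T` are both misère `P`-positions for some `T`. -/
def Linked (G H : IGame) : Prop :=
  ∃ T : IGame, MisereP (add G T) ∧ MisereP (add H T)

/-- `H` is a part of `G` if `G = H + X` (misère-equal) for some `X`. -/
def IsPart (H G : IGame) : Prop :=
  ∃ X : IGame, MEquiv G (add H X)

/-- `G` has a reversible option: some option `G'` of `G` has an option `G''` misère-equal
to `G`. -/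
def HasReversibleOption (G : IGame) : Prop :=
  ∃ G' ∈ G.opts, ∃ G'' ∈ G'.opts, MEquiv G'' G

/-- `G` is in simplest (canonical) form: neither `G` nor any of its hereditary
subpositions has a reversible option. -/
def Canonical (G : IGame) : Prop :=
  ∀ H : IGame, Relation.ReflTransGen IsOption H G → ¬ HasReversibleOption H

/-- `G` is even if the simplest form of `G` occurs as an option of the simplest form of
`G + *`. -/
def EvenG (G : IGame) : Prop :=
  ∃ K L : IGame, Canonical K ∧ MEquiv K G ∧ Canonical L ∧ MEquiv L (add G star) ∧
    IsOption K L

/-- `G` is odd if `G + *` is even. -/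
def OddG (G : IGame) : Prop := EvenG (add G star)

/-- A unit is a game with an additive inverse (up to misère equality). -/
def IsUnitG (U : IGame) : Prop :=
  ∃ V : IGame, MEquiv (add U V) zero

/-- `G` and `H` are associates if they differ by a unit. -/
def Assoc (G H : IGame) : Prop :=
  ∃ U : IGame, IsUnitG U ∧ MEquiv G (add H U)

/-- `G` is prime if `G` is not a unit and every part of `G` is associated to `0` or
to `G`. -/
def PrimeG (G : IGame) : Prop :=
  ¬ IsUnitG G ∧ ∀ H : IGame, IsPart H G → Assoc H zero ∨ Assoc H G

/-- The sum `n · G` of `n` copies of `G`. -/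
def nsmul : ℕ → IGame → IGame
  | 0, _ => zero
  | n + 1, G => add G (nsmul n G)

/-- The sum of a list of games. -/
def listSum (L : List IGame) : IGame := L.foldr add zero

/-- The mate `G⁻` of `G`. -/
def mate : IGame → IGame
  | mk [] => star
  | mk (x :: l) => mk ((x :: l).attach.map fun y => mate y.1)
termination_by G => sizeOf G
decreasing_by exact sizeOf_lt_of_mem y.2

/-- The formal birthday of a game. -/
def fbd : IGame → ℕ
  | mk l => (l.attach.map fun x => fbd x.1 + 1).foldr max 0
termination_by G => sizeOf G
decreasing_by exact sizeOf_lt_of_mem x.2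

/-- The birthday of a game: the least formal birthday among all misère-equal games. -/
noncomputable def birthday (G : IGame) : ℕ :=
  sInf (fbd '' {H : IGame | MEquiv G H})

instance setoid : Setoid IGame :=
  ⟨MEquiv, fun _ => mequiv_refl _, mequiv_symm, mequiv_trans⟩

/-- The monoid of misère impartial game values: games modulo misère equality. -/
def MGame := Quotient setoid

/-!
Let `G + H = 0`. Every option `T` of a game equal to `0` has an option equal to `0`: otherwise
`T` is linked to `0` (some `P`-position `S` makes `T + S` a `P`-position as well), and `T + S`
would be a `P`-option of the `P`-position `G + H + S`. For `T = G' + H` this gives either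
`G'' + H = 0` for an option `G''` of `G'`, and then `H ∈ {0, *}` by induction, or `G' + H' = 0`
for an option `H'` of `H`, and then `G' ∈ {0, *}`. In the remaining case all options of `G` and
of `H` lie in `{0, *}`, so `G` and `H` are each `0`, `*` or `*2`, and `*2 + *2 ≠ 0`.
Once one summand `B` lies in `{0, *}`, so does the other: `B + B = 0` forces `A = A + B + B = B`.
-/

theorem sizeOf_lt_of_mem_opts {g G : IGame} (h : g ∈ G.opts) : sizeOf g < sizeOf G := by
  obtain ⟨l⟩ := G
  exact sizeOf_lt_of_mem h

theorem eq_zero_of_opts_eq_nil {G : IGame} (h : G.opts = []) : G = zero := by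
  obtain ⟨l⟩ := G
  cases h
  rfl

@[simp] theorem opts_mk (l : List IGame) : (mk l).opts = l := rfl
@[simp] theorem opts_zero : zero.opts = [] := rfl
@[simp] theorem opts_star : star.opts = [zero] := rfl
@[simp] theorem opts_star2 : star2.opts = [zero, star] := rfl

theorem opts_add (G H : IGame) :
    (add G H).opts = G.opts.map (add · H) ++ H.opts.map (add G ·) := by
  obtain ⟨l⟩ := G
  obtain ⟨r⟩ := H
  rw [add]
  simp [opts]

theorem mem_opts_add_left {g G : IGame} (H : IGame) (h : g ∈ G.opts) :
    add g H ∈ (add G H).opts := by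
  rw [opts_add]
  exact List.mem_append_left _ (List.mem_map_of_mem h)

theorem mem_opts_add_right {h H : IGame} (G : IGame) (hh : h ∈ H.opts) :
    add G h ∈ (add G H).opts := by
  rw [opts_add]
  exact List.mem_append_right _ (List.mem_map_of_mem hh)

theorem forall_mem_opts_add {G H : IGame} {p : IGame → Prop} :
    (∀ t ∈ (add G H).opts, p t) ↔
      (∀ g ∈ G.opts, p (add g H)) ∧ ∀ h ∈ H.opts, p (add G h) := by
  simp [opts_add, or_imp, forall_and]

theorem exists_mem_opts_add {G H : IGame} {p : IGame → Prop} :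
    (∃ t ∈ (add G H).opts, p t) ↔
      (∃ g ∈ G.opts, p (add g H)) ∨ ∃ h ∈ H.opts, p (add G h) := by
  simp [opts_add, or_and_right, exists_or]

theorem misereP_iff (G : IGame) :
    MisereP G ↔ G.opts ≠ [] ∧ ∀ g ∈ G.opts, ¬ MisereP g := by
  obtain ⟨l⟩ := G
  rw [MisereP]
  rfl

theorem not_misereP_of_mem_opts {g G : IGame} (hg : g ∈ G.opts) (h : MisereP g) :
    ¬ MisereP G :=
  fun hG => ((misereP_iff G).1 hG).2 g hg h

theorem misereP_add_iff (G H : IGame) :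
    MisereP (add G H) ↔ (G.opts ≠ [] ∨ H.opts ≠ []) ∧
      (∀ g ∈ G.opts, ¬ MisereP (add g H)) ∧ ∀ h ∈ H.opts, ¬ MisereP (add G h) := by
  rw [misereP_iff, forall_mem_opts_add, opts_add]
  simp [or_iff_not_and_not]

theorem misereP_add_zero_iff (G : IGame) : MisereP (add G zero) ↔ MisereP G := by
  rw [misereP_add_iff, misereP_iff]
  have ih : ∀ g ∈ G.opts, MisereP (add g zero) ↔ MisereP g := fun g hg =>
    have := sizeOf_lt_of_mem_opts hg
    misereP_add_zero_iff g
  simp +contextual [ih]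
termination_by sizeOf G

theorem MEquiv.misereP_iff {G H : IGame} (h : MEquiv G H) : MisereP G ↔ MisereP H := by
  rw [← misereP_add_zero_iff G, ← misereP_add_zero_iff H]
  exact h zero

section Replacement

variable {G H : IGame} (forth : ∀ g ∈ G.opts, ∃ h ∈ H.opts, MEquiv g h)
  (back : ∀ h ∈ H.opts, ∃ g ∈ G.opts, MEquiv g h)
include forth back

theorem misereP_add_iff_of_forall_opts (X : IGame) :
    MisereP (add G X) ↔ MisereP (add H X) := by
  have ih : ∀ x ∈ X.opts, MisereP (add G x) ↔ MisereP (add H x) := fun x hx =>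
    have := sizeOf_lt_of_mem_opts hx
    misereP_add_iff_of_forall_opts x
  have opts_ne_nil : G.opts ≠ [] ↔ H.opts ≠ [] := by
    simp only [ne_eq, List.eq_nil_iff_forall_not_mem, not_forall, not_not]
    exact ⟨fun ⟨g, hg⟩ => (forth g hg).imp fun _ h => h.1,
      fun ⟨h, hh⟩ => (back h hh).imp fun _ g => g.1⟩
  have left_opts :
      (∀ g ∈ G.opts, ¬ MisereP (add g X)) ↔ ∀ h ∈ H.opts, ¬ MisereP (add h X) :=
    ⟨fun hG h hh => by obtain ⟨g, hg, e⟩ := back h hh; exact (e X).not.1 (hG g hg),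
      fun hH g hg => by obtain ⟨h, hh, e⟩ := forth g hg; exact (e X).not.2 (hH h hh)⟩
  rw [misereP_add_iff, misereP_add_iff, opts_ne_nil, left_opts]
  simp +contextual [ih]
termination_by sizeOf X

theorem mequiv_of_forall_opts : MEquiv G H :=
  misereP_add_iff_of_forall_opts forth back

end Replacement

theorem mequiv_zero_add (G : IGame) : MEquiv (add zero G) G := by
  have ih : ∀ g ∈ G.opts, MEquiv (add zero g) g := fun g hg =>
    have := sizeOf_lt_of_mem_opts hg
    mequiv_zero_add g
  apply mequiv_of_forall_opts
  · simpa [forall_mem_opts_add] using fun g hg => ⟨g, hg, ih g hg⟩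
  · exact fun g hg => ⟨add zero g, mem_opts_add_right _ hg, ih g hg⟩
termination_by sizeOf G

theorem mequiv_add_comm (A B : IGame) : MEquiv (add A B) (add B A) := by
  have ihA : ∀ a ∈ A.opts, MEquiv (add a B) (add B a) := fun a ha =>
    have := sizeOf_lt_of_mem_opts ha
    mequiv_add_comm a B
  have ihB : ∀ b ∈ B.opts, MEquiv (add A b) (add b A) := fun b hb =>
    have := sizeOf_lt_of_mem_opts hb
    mequiv_add_comm A b
  apply mequiv_of_forall_opts
  · rw [forall_mem_opts_add]
    exact ⟨fun a ha => ⟨_, mem_opts_add_right B ha, ihA a ha⟩,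
      fun b hb => ⟨_, mem_opts_add_left A hb, ihB b hb⟩⟩
  · rw [forall_mem_opts_add]
    exact ⟨fun b hb => ⟨_, mem_opts_add_right A hb, ihB b hb⟩,
      fun a ha => ⟨_, mem_opts_add_left B ha, ihA a ha⟩⟩
termination_by sizeOf A + sizeOf B

theorem mequiv_add_assoc (A B C : IGame) : MEquiv (add (add A B) C) (add A (add B C)) := by
  have ihA : ∀ a ∈ A.opts, MEquiv (add (add a B) C) (add a (add B C)) := fun a ha =>
    have := sizeOf_lt_of_mem_opts ha
    mequiv_add_assoc a B C
  have ihB : ∀ b ∈ B.opts, MEquiv (add (add A b) C) (add A (add b C)) := fun b hb =>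
    have := sizeOf_lt_of_mem_opts hb
    mequiv_add_assoc A b C
  have ihC : ∀ c ∈ C.opts, MEquiv (add (add A B) c) (add A (add B c)) := fun c hc =>
    have := sizeOf_lt_of_mem_opts hc
    mequiv_add_assoc A B c
  apply mequiv_of_forall_opts
  · simp only [forall_mem_opts_add]
    exact ⟨⟨fun a ha => ⟨_, mem_opts_add_left _ ha, ihA a ha⟩,
      fun b hb => ⟨_, mem_opts_add_right A (mem_opts_add_left C hb), ihB b hb⟩⟩,
      fun c hc => ⟨_, mem_opts_add_right A (mem_opts_add_right B hc), ihC c hc⟩⟩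
  · simp only [forall_mem_opts_add]
    exact ⟨fun a ha => ⟨_, mem_opts_add_left _ (mem_opts_add_left B ha), ihA a ha⟩,
      ⟨fun b hb => ⟨_, mem_opts_add_left C (mem_opts_add_right A hb), ihB b hb⟩,
      fun c hc => ⟨_, mem_opts_add_right _ hc, ihC c hc⟩⟩⟩
termination_by sizeOf A + sizeOf B + sizeOf C

theorem mequiv_add_zero (G : IGame) : MEquiv (add G zero) G :=
  mequiv_trans (mequiv_add_comm G zero) (mequiv_zero_add G)

theorem MEquiv.add_right {A B : IGame} (h : MEquiv A B) (C : IGame) :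
    MEquiv (add A C) (add B C) := fun X =>
  calc MisereP (add (add A C) X) ↔ MisereP (add A (add C X)) :=
        (mequiv_add_assoc A C X).misereP_iff
    _ ↔ MisereP (add B (add C X)) := h (add C X)
    _ ↔ MisereP (add (add B C) X) := (mequiv_add_assoc B C X).misereP_iff.symm

theorem MEquiv.add_left {A B : IGame} (h : MEquiv A B) (C : IGame) :
    MEquiv (add C A) (add C B) :=
  calc add C A
    _ ≈ add A C := mequiv_add_comm C A
    _ ≈ add B C := h.add_right C
    _ ≈ add C B := mequiv_add_comm B C

theorem not_misereP_zero : ¬ MisereP zero := by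
  rw [misereP_iff]
  simp

theorem misereP_star : MisereP star := by
  rw [misereP_iff]
  simp [not_misereP_zero]

theorem not_misereP_star_add_of_misereP {X : IGame} (hX : MisereP X) :
    ¬ MisereP (add star X) :=
  not_misereP_of_mem_opts (mem_opts_add_left X (by simp))
    ((mequiv_zero_add X).misereP_iff.2 hX)

section OptionsEqualStar

variable {K : IGame} (hne : K.opts ≠ []) (hK : ∀ k ∈ K.opts, MEquiv k star)
include hne hK

theorem misereP_add_iff_of_forall_opts_mequiv_star (X : IGame) :
    MisereP (add K X) ↔ MisereP X := by
  have ih : ∀ x ∈ X.opts, MisereP (add K x) ↔ MisereP x := fun x hx =>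
    have := sizeOf_lt_of_mem_opts hx
    misereP_add_iff_of_forall_opts_mequiv_star x
  have left_opts : (∀ k ∈ K.opts, ¬ MisereP (add k X)) ↔ ¬ MisereP (add star X) := by
    obtain ⟨k, hk⟩ := List.exists_mem_of_ne_nil _ hne
    exact ⟨fun h => (hK k hk X).not.1 (h k hk), fun h k hk => (hK k hk X).not.2 h⟩
  rw [misereP_add_iff, left_opts]
  simp +contextual only [ih, hne, ne_eq, not_false_eq_true, true_or, true_and]
  by_cases hX : X.opts = []
  · cases eq_zero_of_opts_eq_nil hX
    simp [(mequiv_add_zero star).misereP_iff, misereP_star, not_misereP_zero]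
  · rw [misereP_iff X]
    exact ⟨fun h => ⟨hX, h.2⟩, fun h =>
      ⟨not_misereP_star_add_of_misereP ((misereP_iff X).2 h), h.2⟩⟩
termination_by sizeOf X

theorem mequiv_zero_of_forall_opts_mequiv_star : MEquiv K zero := fun X =>
  (misereP_add_iff_of_forall_opts_mequiv_star hne hK X).trans
    (mequiv_zero_add X).misereP_iff.symm

end OptionsEqualStar

theorem mequiv_star_add_star : MEquiv (add star star) zero := by
  apply mequiv_zero_of_forall_opts_mequiv_star (by simp [opts_add])
  simp [forall_mem_opts_add, mequiv_zero_add, mequiv_add_zero]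

def IsZeroOrStar (G : IGame) : Prop := MEquiv G zero ∨ MEquiv G star

theorem IsZeroOrStar.of_mequiv {A B : IGame} (h : MEquiv A B) :
    IsZeroOrStar B → IsZeroOrStar A
  | .inl hB => .inl (mequiv_trans h hB)
  | .inr hB => .inr (mequiv_trans h hB)

theorem IsZeroOrStar.add_self_mequiv_zero {A : IGame} :
    IsZeroOrStar A → MEquiv (add A A) zero
  | .inl h => calc add A A
      _ ≈ add zero zero := mequiv_trans (h.add_right A) (h.add_left zero)
      _ ≈ zero := mequiv_zero_add zero
  | .inr h => calc add A A
      _ ≈ add star star := mequiv_trans (h.add_right A) (h.add_left star)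
      _ ≈ zero := mequiv_star_add_star

theorem IsZeroOrStar.mequiv_of_add_mequiv_zero {A B : IGame} (hB : IsZeroOrStar B)
    (h : MEquiv (add A B) zero) : MEquiv A B :=
  calc A
    _ ≈ add A zero := mequiv_symm (mequiv_add_zero A)
    _ ≈ add A (add B B) := (mequiv_symm hB.add_self_mequiv_zero).add_left A
    _ ≈ add (add A B) B := mequiv_symm (mequiv_add_assoc A B B)
    _ ≈ add zero B := h.add_right B
    _ ≈ B := mequiv_zero_add B

theorem isZeroOrStar_or_mequiv_star2_of_forall_opts {K : IGame}
    (hK : ∀ k ∈ K.opts, IsZeroOrStar k) : IsZeroOrStar K ∨ MEquiv K star2 := by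
  by_cases h0 : ∃ k ∈ K.opts, MEquiv k zero <;> by_cases h1 : ∃ k ∈ K.opts, MEquiv k star
  · right
    apply mequiv_of_forall_opts
    · intro k hk
      rcases hK k hk with e | e
      · exact ⟨zero, by simp, e⟩
      · exact ⟨star, by simp, e⟩
    · simpa using ⟨h0, h1⟩
  · refine .inl (.inr (mequiv_of_forall_opts (fun k hk => ⟨zero, by simp, ?_⟩) (by simpa)))
    exact (hK k hk).resolve_right fun e => h1 ⟨k, hk, e⟩
  · obtain ⟨k, hk, -⟩ := h1
    refine .inl (.inl (mequiv_zero_of_forall_opts_mequiv_star (List.ne_nil_of_mem hk) ?_))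
    exact fun k hk => (hK k hk).resolve_left fun e => h0 ⟨k, hk, e⟩
  · have : K.opts = [] := List.eq_nil_iff_forall_not_mem.2 fun k hk =>
      (hK k hk).elim (fun e => h0 ⟨k, hk, e⟩) fun e => h1 ⟨k, hk, e⟩
    exact .inl (.inl (eq_zero_of_opts_eq_nil this ▸ mequiv_refl zero))

theorem not_misereP_star2 : ¬ MisereP star2 :=
  not_misereP_of_mem_opts (by simp) misereP_star

theorem not_misereP_star2_add_star : ¬ MisereP (add star2 star) :=
  not_misereP_of_mem_opts (mem_opts_add_left star (by simp))
    ((mequiv_zero_add star).misereP_iff.2 misereP_star)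

theorem misereP_star2_add_star2 : MisereP (add star2 star2) := by
  rw [misereP_add_iff]
  have h₁ : ¬ MisereP (add star star2) :=
    (mequiv_add_comm star star2).misereP_iff.not.2 not_misereP_star2_add_star
  have h₀ : ¬ MisereP (add zero star2) :=
    (mequiv_zero_add star2).misereP_iff.not.2 not_misereP_star2
  have h₀' : ¬ MisereP (add star2 zero) :=
    (mequiv_add_zero star2).misereP_iff.not.2 not_misereP_star2
  simp [h₀, h₁, h₀', not_misereP_star2_add_star]

theorem not_star2_add_star2_mequiv_zero : ¬ MEquiv (add star2 star2) zero := fun h =>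
  not_misereP_zero (h.misereP_iff.1 misereP_star2_add_star2)

theorem exists_misereP_add_not_misereP_of_not_mequiv_zero {A : IGame} (hA : ¬ MEquiv A zero) :
    ∃ W, MisereP (add A W) ∧ ¬ MisereP W := by
  obtain ⟨X, hX⟩ : ∃ X, ¬ (MisereP (add A X) ↔ MisereP X) := by
    simpa [MEquiv, (mequiv_zero_add _).misereP_iff] using hA
  by_cases hPX : MisereP X
  swap
  · exact ⟨X, by tauto, hPX⟩
  have hAX : ¬ MisereP (add A X) := by tauto
  -- `W = {X} ∪ {w_a}`, where `w_a = X` if `a = 0` and `w_a` is a witness for `a` otherwise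
  have witness : ∀ a, ∃ w, a ∈ A.opts →
      (MEquiv a zero ∧ w = X) ∨ (MisereP (add a w) ∧ ¬ MisereP w) := fun a => by
    by_cases ha : a ∈ A.opts
    · by_cases ha0 : MEquiv a zero
      · exact ⟨X, fun _ => .inl ⟨ha0, rfl⟩⟩
      · have := sizeOf_lt_of_mem_opts ha
        obtain ⟨w, hw⟩ := exists_misereP_add_not_misereP_of_not_mequiv_zero ha0
        exact ⟨w, fun _ => .inr hw⟩
    · exact ⟨X, fun h => absurd h ha⟩
  choose f hf using witness
  have hW : ¬ MisereP (mk (X :: A.opts.map f)) :=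
    not_misereP_of_mem_opts List.mem_cons_self hPX
  refine ⟨mk (X :: A.opts.map f), ?_, hW⟩
  rw [misereP_add_iff]
  refine ⟨.inr (List.cons_ne_nil _ _), fun a ha => ?_, ?_⟩
  · rcases hf a ha with ⟨ha0, -⟩ | ⟨hPa, -⟩
    · exact (ha0 _).not.2 ((mequiv_zero_add _).misereP_iff.not.2 hW)
    · exact not_misereP_of_mem_opts
        (mem_opts_add_right a (List.mem_cons_of_mem X (List.mem_map_of_mem ha))) hPa
  · simp only [opts_mk, List.forall_mem_cons, List.forall_mem_map]
    refine ⟨hAX, fun a ha => ?_⟩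
    rcases hf a ha with ⟨-, hfa⟩ | ⟨hPa, -⟩
    · exact hfa ▸ hAX
    · exact not_misereP_of_mem_opts (mem_opts_add_left (f a) ha) hPa
termination_by sizeOf A

theorem exists_misereP_misereP_add_of_forall_opts_not_mequiv_zero {T : IGame}
    (hT : ∀ t ∈ T.opts, ¬ MEquiv t zero) : ∃ S, MisereP S ∧ MisereP (add T S) := by
  by_cases hne : T.opts = []
  · cases eq_zero_of_opts_eq_nil hne
    exact ⟨star, misereP_star, (mequiv_zero_add star).misereP_iff.2 misereP_star⟩
  have witness : ∀ t, ∃ w, t ∈ T.opts → MisereP (add t w) ∧ ¬ MisereP w := fun t => by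
    by_cases ht : t ∈ T.opts
    · obtain ⟨w, hw⟩ := exists_misereP_add_not_misereP_of_not_mequiv_zero (hT t ht)
      exact ⟨w, fun _ => hw⟩
    · exact ⟨zero, fun h => absurd h ht⟩
  choose f hf using witness
  refine ⟨mk (T.opts.map f), ?_, ?_⟩
  · rw [misereP_iff]
    simpa [hne] using fun t ht => (hf t ht).2
  · rw [misereP_add_iff]
    refine ⟨.inl hne, fun t ht => ?_, ?_⟩
    · exact not_misereP_of_mem_opts (mem_opts_add_right t (List.mem_map_of_mem (f := f) ht))
        (hf t ht).1
    · simpa using fun t ht =>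
        not_misereP_of_mem_opts (mem_opts_add_left (f t) ht) (hf t ht).1

theorem exists_opts_mequiv_zero_of_mem_opts {U T : IGame} (hU : MEquiv U zero)
    (hT : T ∈ U.opts) : ∃ t ∈ T.opts, MEquiv t zero := by
  by_contra! h
  obtain ⟨S, hS, hTS⟩ := exists_misereP_misereP_add_of_forall_opts_not_mequiv_zero h
  have hUS : MisereP (add U S) := (hU S).2 ((mequiv_zero_add S).misereP_iff.2 hS)
  exact not_misereP_of_mem_opts (mem_opts_add_left S hT) hTS hUS

theorem IsZeroOrStar.of_add_mequiv_zero {A B : IGame} (hB : IsZeroOrStar B)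
    (h : MEquiv (add A B) zero) : IsZeroOrStar A :=
  hB.of_mequiv (hB.mequiv_of_add_mequiv_zero h)

theorem isZeroOrStar_and_of_or {A B : IGame} (h : MEquiv (add A B) zero) :
    IsZeroOrStar A ∨ IsZeroOrStar B → IsZeroOrStar A ∧ IsZeroOrStar B
  | .inl hA => ⟨hA, hA.of_add_mequiv_zero (mequiv_trans (mequiv_add_comm B A) h)⟩
  | .inr hB => ⟨hB.of_add_mequiv_zero h, hB⟩

theorem isZeroOrStar_or_forall_opts_isZeroOrStar {A B : IGame} (hAB : MEquiv (add A B) zero)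
    (hsmaller : ∀ A' B', sizeOf A' + sizeOf B' < sizeOf A + sizeOf B →
      MEquiv (add A' B') zero → IsZeroOrStar A' ∧ IsZeroOrStar B') :
    IsZeroOrStar B ∨ ∀ a ∈ A.opts, IsZeroOrStar a := by
  by_cases hrev : ∃ a ∈ A.opts, ∃ a' ∈ a.opts, MEquiv (add a' B) zero
  · obtain ⟨a, ha, a', ha', he⟩ := hrev
    have := sizeOf_lt_of_mem_opts ha
    have := sizeOf_lt_of_mem_opts ha'
    exact .inl (hsmaller a' B (by omega) he).2
  refine .inr fun a ha => ?_
  obtain ⟨a', ha', he⟩ | ⟨b, hb, he⟩ :=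
    exists_mem_opts_add.1 (exists_opts_mequiv_zero_of_mem_opts hAB (mem_opts_add_left B ha))
  · exact absurd ⟨a, ha, a', ha', he⟩ hrev
  · have := sizeOf_lt_of_mem_opts ha
    have := sizeOf_lt_of_mem_opts hb
    exact (hsmaller a b (by omega) he).1

theorem isZeroOrStar_or_of_add_mequiv_zero (G H : IGame) (h : MEquiv (add G H) zero) :
    IsZeroOrStar G ∨ IsZeroOrStar H := by
  have ih : ∀ A B, sizeOf A + sizeOf B < sizeOf G + sizeOf H → MEquiv (add A B) zero →
      IsZeroOrStar A ∧ IsZeroOrStar B := fun A B _ hAB =>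
    isZeroOrStar_and_of_or hAB (isZeroOrStar_or_of_add_mequiv_zero A B hAB)
  rcases isZeroOrStar_or_forall_opts_isZeroOrStar h ih with hH | hG'
  · exact .inr hH
  rcases isZeroOrStar_or_forall_opts_isZeroOrStar (mequiv_trans (mequiv_add_comm H G) h)
    fun A B hlt => ih A B (by omega) with hG | hH'
  · exact .inl hG
  rcases isZeroOrStar_or_mequiv_star2_of_forall_opts hG' with hG | hG2
  · exact .inl hG
  rcases isZeroOrStar_or_mequiv_star2_of_forall_opts hH' with hH | hH2
  · exact .inr hH
  refine absurd ?_ not_star2_add_star2_mequiv_zero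
  calc add star2 star2
    _ ≈ add G star2 := (mequiv_symm hG2).add_right star2
    _ ≈ add G H := (mequiv_symm hH2).add_left G
    _ ≈ zero := h
termination_by sizeOf G + sizeOf H

/-- The only parts of `0` are `0` and `*`. -/
theorem parts_of_zero (X Y : IGame) (h : MEquiv (add X Y) zero) :
    (MEquiv X zero ∨ MEquiv X star) ∧ (MEquiv Y zero ∨ MEquiv Y star) :=
  isZeroOrStar_and_of_or h (isZeroOrStar_or_of_add_mequiv_zero X Y h)

end IGame
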